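/- Let M be a scheme that is locally of finite type and separated over a field k, let M₀ ⊆ M be an irreducible component with generic point g, and suppose there exists a proper k-scheme S together with a k-morphism φ : S → M whose image contains g. Then M₀, with its reduced closed subscheme structure, is proper over k. -/

import Mathlib

/-!
Since `M` is separated over `k` and `S` is proper over `k`, the morphism `φ` is proper, so its
image is closed; containing `g`, it contains `M₀ = closure {g}`. Hence the closed subscheme `Z`
is covered by the closed subscheme `S ×_M Z` of `S`, which is proper over `k`, and universal
closedness descends along the surjection `S ×_M Z → Z`.
-/

open AlgebraicGeometry CategoryTheory CategoryTheory.Limits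

namespace AlgebraicGeometry

lemma Scheme.Hom.closure_singleton_subset_range {X Y : Scheme} (f : X ⟶ Y) [UniversallyClosed f]
    {y : Y} (hy : y ∈ Set.range f.base) : closure {y} ⊆ Set.range f.base :=
  f.isClosedMap.isClosed_range.closure_subset_iff.mpr (Set.singleton_subset_iff.mpr hy)

lemma surjective_pullback_snd_of_range_subset {X Y Z : Scheme} (f : X ⟶ Z) (g : Y ⟶ Z)
    (h : Set.range g.base ⊆ Set.range f.base) : Surjective (pullback.snd f g) := by
  rw [surjective_iff, ← Set.range_eq_univ, Scheme.Pullback.range_snd,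
    Set.preimage_eq_univ_iff]
  exact h

lemma UniversallyClosed.comp_of_range_subset {S Z M T : Scheme} (φ : S ⟶ M) (ι : Z ⟶ M)
    (h : M ⟶ T) [UniversallyClosed (φ ≫ h)] [UniversallyClosed ι]
    (hrange : Set.range ι.base ⊆ Set.range φ.base) : UniversallyClosed (ι ≫ h) := by
  have := surjective_pullback_snd_of_range_subset φ ι hrange
  have : UniversallyClosed (pullback.snd φ ι ≫ ι ≫ h) := by
    rw [← Category.assoc, ← pullback.condition, Category.assoc]
    infer_instance
  exact .of_comp_surjective (pullback.snd φ ι) (ι ≫ h)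

end AlgebraicGeometry

theorem irreducible_component_proper_of_dominated_by_proper_general (k : Type*) [Field k]
    (M S : Scheme) (fM : M ⟶ Spec (CommRingCat.of k)) (fS : S ⟶ Spec (CommRingCat.of k))
    [LocallyOfFiniteType fM] [IsSeparated fM] [IsProper fS]
    (M₀ : Set M)
    (g : M) (hg : IsGenericPoint g M₀)
    (φ : S ⟶ M) (hφ : φ ≫ fM = fS) (hgφ : g ∈ Set.range φ.base) :
    ∀ (Z : Scheme) (ι : Z ⟶ M), IsClosedImmersion ι → IsReduced Z →
      Set.range ι.base = M₀ → IsProper (ι ≫ fM) := by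
  intro Z ι _ _ hrange
  have : IsProper (φ ≫ fM) := hφ ▸ inferInstance
  have : IsProper φ := .of_comp φ fM
  have hsub : Set.range ι.base ⊆ Set.range φ.base := by
    rw [hrange, ← hg.def]
    exact φ.closure_singleton_subset_range hgφ
  have : UniversallyClosed (ι ≫ fM) := .comp_of_range_subset φ ι fM hsub
  constructor

/-- Let `M` be a scheme, locally of finite type and separated over a field `k`,
let `M₀ ⊆ M` be an irreducible component with generic point `g`, and suppose there is a proper
`k`-scheme `S` and a `k`-morphism `φ : S → M` whose image contains `g`.  Then `M₀`, with its
reduced closed subscheme structure (i.e. any reduced scheme `Z` with a closed immersion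
`ι : Z → M` whose image is `M₀`), is proper over `k`. -/
theorem irreducible_component_proper_of_dominated_by_proper (k : Type*) [Field k]
    (M S : Scheme) (fM : M ⟶ Spec (CommRingCat.of k)) (fS : S ⟶ Spec (CommRingCat.of k))
    [LocallyOfFiniteType fM] [IsSeparated fM] [IsProper fS]
    (M₀ : Set M) (hM₀ : M₀ ∈ irreducibleComponents M)
    (g : M) (hg : IsGenericPoint g M₀)
    (φ : S ⟶ M) (hφ : φ ≫ fM = fS) (hgφ : g ∈ Set.range φ.base) :
    ∀ (Z : Scheme) (ι : Z ⟶ M), IsClosedImmersion ι → IsReduced Z →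
      Set.range ι.base = M₀ → IsProper (ι ≫ fM) :=
  irreducible_component_proper_of_dominated_by_proper_general k M S fM fS M₀ g hg φ hφ hgφ
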